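/- arXiv:1903.07206 — 2 statements merged into one kernel-verified Lean document; each statement's English description precedes it below -/
import Mathlib

section
/- Let c, J, m be positive integers. There exists a constant C = C(c,J,m), depending only on c, J, m, such that the following holds: if G is a nilpotent group of class at most c+1 that can be generated by m elements and such that γ_c(G) has cardinality at most J, then G has a subgroup H of nilpotency class at most c with index |G : H| ≤ C. One may take C = J^(m^c). -/
/-!
Write `c = k + 1`. Since `γ_{k+2}(G) = 1`, the subgroup `γ_{k+1}(G)` is central, and modulo it
`γ_k(G)` is generated by the left-normed commutators `[s₀, s₁, …, s_k]` of the `m` generators.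
The centralizer `H` of these at most `m ^ c` commutators therefore centralizes `γ_k(G)`, so
`γ_c(H) ≤ [γ_k(G), H] = 1`. Each such commutator `w` lies in `γ_k(G)`, so its conjugates lie in
`γ_c(G) w`; hence its centralizer has index at most `|γ_c(G)| ≤ J`.
-/

open Subgroup

open scoped commutatorElement

namespace Subgroup

variable {G : Type*} [Group G]

theorem index_centralizer_singleton_le {w : G} {N : Subgroup G} [Finite N]
    (h : ∀ g, ⁅w, g⁆ ∈ N) : (centralizer {w}).index ≤ Nat.card N := by
  have hindex : (centralizer {w}).index = (MulAction.orbit (ConjAct G) w).ncard := by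
    rw [centralizer_eq_comap_stabilizer, ← MulAction.index_stabilizer]
    exact index_comap_of_surjective _ ConjAct.toConjAct.surjective
  have horbit : MulAction.orbit (ConjAct G) w ⊆ (· * w) '' (N : Set G) := by
    rintro _ ⟨g, rfl⟩
    refine ⟨⁅w, ConjAct.ofConjAct g⁆⁻¹, inv_mem (h _), ?_⟩
    simp only [ConjAct.smul_def, commutatorElement_def]
    group
  calc (centralizer {w}).index = (MulAction.orbit (ConjAct G) w).ncard := hindex
    _ ≤ ((· * w) '' (N : Set G)).ncard := Set.ncard_le_ncard horbit (Set.toFinite _)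
    _ ≤ (N : Set G).ncard := Set.ncard_image_le (Set.toFinite _)
    _ = Nat.card N := (Nat.card_coe_set_eq _).symm

theorem index_centralizer_le_pow_card (W : Finset G) {N : Subgroup G} [Finite N]
    (h : ∀ w ∈ W, ∀ g, ⁅w, g⁆ ∈ N) : (centralizer (W : Set G)).index ≤ Nat.card N ^ W.card := by
  rw [centralizer_eq_iInf, iInf_subtype']
  calc (⨅ w : (W : Set G), centralizer {(w : G)}).index
      ≤ ∏ w : (W : Set G), (centralizer {(w : G)}).index := index_iInf_le _
    _ ≤ Nat.card N ^ (Finset.univ : Finset (W : Set G)).card :=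
      Finset.prod_le_pow_card _ _ _ fun w _ => index_centralizer_singleton_le (h w w.2)
    _ = Nat.card N ^ W.card := by simp

theorem lowerCentralSeries_succ_eq_bot_of_le_centralizer {H : Subgroup G} {k : ℕ}
    (hH : H ≤ centralizer ((⊤ : Subgroup G).lowerCentralSeries k)) :
    (⊤ : Subgroup H).lowerCentralSeries (k + 1) = ⊥ := by
  apply map_injective H.subtype_injective
  rw [map_bot, top_subtype_lowerCentralSeries, lowerCentralSeries_succ,
    commutator_eq_bot_iff_le_centralizer, ← le_centralizer_iff]
  exact hH.trans (centralizer_le (lowerCentralSeries_mono k (le_top : H ≤ ⊤)))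

theorem commutator_closure_closure_le {A B : Set G} {N : Subgroup G} [N.Normal]
    (h : ∀ a ∈ A, ∀ b ∈ B, ⁅a, b⁆ ∈ N) : ⁅closure A, closure B⁆ ≤ N := by
  -- in `G ⧸ N` the hypothesis says that the images of `A` and `B` commute
  rw [← QuotientGroup.ker_mk' N, ← map_eq_bot_iff, map_commutator, MonoidHom.map_closure,
    MonoidHom.map_closure, commutator_eq_bot_iff_le_centralizer, closure_le, centralizer_closure]
  rintro _ ⟨a, ha, rfl⟩ _ ⟨b, hb, rfl⟩
  have hab := (QuotientGroup.eq_one_iff _).mpr (h a ha b hb)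
  rw [← QuotientGroup.mk'_apply, map_commutatorElement, commutatorElement_eq_one_iff_mul_comm] at hab
  exact hab.symm

theorem normal_closure_sup_of_commutator_mem {A : Set G} {N : Subgroup G} [N.Normal]
    (h : ∀ a ∈ A, ∀ g, ⁅a, g⁆ ∈ N) : (closure A ⊔ N).Normal := by
  rw [← closure_eq N, ← closure_union]
  refine ⟨fun x hx g => ?_⟩
  have hconj : closure (A ∪ N) ≤ (closure (A ∪ N)).comap (MulAut.conj g).toMonoidHom := by
    rw [closure_le]
    rintro a (ha | ha)
    · have : g * a * g⁻¹ = ⁅a, g⁆⁻¹ * a := by group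
      simp only [MulEquiv.coe_toMonoidHom, coe_comap, Set.mem_preimage, MulAut.conj_apply, this]
      exact mul_mem (subset_closure (Or.inr (inv_mem (h a ha g)))) (subset_closure (Or.inl ha))
    · exact subset_closure (Or.inr (‹N.Normal›.conj_mem a ha g))
  exact hconj hx

end Subgroup

section CommutatorWords

variable {G : Type*} [Group G] [DecidableEq G]

def commutatorWords (S : Finset G) : ℕ → Finset G
  | 0 => S
  | k + 1 => Finset.image₂ (⁅·, ·⁆) (commutatorWords S k) S

theorem card_commutatorWords_le (S : Finset G) (k : ℕ) :
    (commutatorWords S k).card ≤ S.card ^ (k + 1) := by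
  induction k with
  | zero => simp [commutatorWords]
  | succ k ih =>
    calc (commutatorWords S (k + 1)).card ≤ (commutatorWords S k).card * S.card :=
          Finset.card_image₂_le _ _ _
      _ ≤ S.card ^ (k + 1) * S.card := Nat.mul_le_mul_right _ ih
      _ = S.card ^ (k + 2) := (pow_succ _ _).symm

theorem commutatorWords_subset_lowerCentralSeries (S : Finset G) (k : ℕ) :
    (commutatorWords S k : Set G) ⊆ (⊤ : Subgroup G).lowerCentralSeries k := by
  induction k with
  | zero => exact fun _ _ => mem_top _
  | succ k ih =>
    intro x hx
    obtain ⟨w, hw, s, -, rfl⟩ := Finset.mem_image₂.mp hx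
    exact commutator_mem_commutator (ih hw) (mem_top s)

theorem lowerCentralSeries_le_closure_commutatorWords_sup {S : Finset G}
    (hS : closure (S : Set G) = ⊤) (k : ℕ) :
    (⊤ : Subgroup G).lowerCentralSeries k ≤
      closure (commutatorWords S k : Set G) ⊔ (⊤ : Subgroup G).lowerCentralSeries (k + 1) := by
  induction k with
  | zero => exact hS.ge.trans le_sup_left
  | succ k ih =>
    have : (closure (commutatorWords S (k + 1) : Set G) ⊔
        (⊤ : Subgroup G).lowerCentralSeries (k + 2)).Normal :=
      normal_closure_sup_of_commutator_mem fun w hw g =>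
        commutator_mem_commutator (commutatorWords_subset_lowerCentralSeries S _ hw) (mem_top g)
    rw [← closure_eq ((⊤ : Subgroup G).lowerCentralSeries (k + 1)), ← Subgroup.closure_union] at ih
    calc (⊤ : Subgroup G).lowerCentralSeries (k + 1)
        = ⁅(⊤ : Subgroup G).lowerCentralSeries k, ⊤⁆ := rfl
      _ ≤ ⁅closure (commutatorWords S k ∪ (⊤ : Subgroup G).lowerCentralSeries (k + 1) : Set G),
          closure (S : Set G)⁆ := commutator_mono ih hS.ge
      _ ≤ _ := by
        refine commutator_closure_closure_le ?_
        rintro a (ha | ha) s hs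
        · exact mem_sup_left (subset_closure (Finset.mem_image₂_of_mem ha hs))
        · exact mem_sup_right (commutator_mem_commutator ha (mem_top s))

theorem centralizer_commutatorWords_le {S : Finset G} (hS : closure (S : Set G) = ⊤) {k : ℕ}
    (hk : (⊤ : Subgroup G).lowerCentralSeries (k + 1) ≤ center G) :
    centralizer (commutatorWords S k : Set G) ≤
      centralizer ((⊤ : Subgroup G).lowerCentralSeries k) := by
  rw [le_centralizer_iff]
  refine (lowerCentralSeries_le_closure_commutatorWords_sup hS k).trans (sup_le ?_ ?_)
  · exact (closure_le _).mpr fun w hw h hh => ((mem_centralizer_iff.mp hh) w hw).symm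
  · exact hk.trans (center_le_centralizer _)

end CommutatorWords

theorem nilpotent_class_reduction_general (c J m : ℕ) (hc : 0 < c) :
    ∀ (G : Type) [Group G],
      (⊤ : Subgroup G).lowerCentralSeries (c + 1) = ⊥ →
      (∃ S : Finset G, S.card ≤ m ∧ Subgroup.closure (S : Set G) = ⊤) →
      ∀ _ : Finite ((⊤ : Subgroup G).lowerCentralSeries c),
      Nat.card ((⊤ : Subgroup G).lowerCentralSeries c) ≤ J →
      ∃ H : Subgroup G, (⊤ : Subgroup H).lowerCentralSeries c = ⊥ ∧ H.index ≤ J ^ (m ^ c) := by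
  obtain ⟨k, rfl⟩ : ∃ k, c = k + 1 := ⟨c - 1, by omega⟩
  intro G _ hG ⟨S, hSm, hS⟩ _ hJ
  classical
  have hcentral : (⊤ : Subgroup G).lowerCentralSeries (k + 1) ≤ center G :=
    commutator_top_right_eq_bot_iff_le_center.mp hG
  refine ⟨centralizer (commutatorWords S k : Set G),
    lowerCentralSeries_succ_eq_bot_of_le_centralizer (centralizer_commutatorWords_le hS hcentral),
    ?_⟩
  calc (centralizer (commutatorWords S k : Set G)).index
      ≤ Nat.card ((⊤ : Subgroup G).lowerCentralSeries (k + 1)) ^ (commutatorWords S k).card :=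
        index_centralizer_le_pow_card _ fun w hw g =>
          commutator_mem_commutator (commutatorWords_subset_lowerCentralSeries S k hw) (mem_top g)
    _ ≤ Nat.card ((⊤ : Subgroup G).lowerCentralSeries (k + 1)) ^ (m ^ (k + 1)) :=
        Nat.pow_le_pow_right Nat.card_pos
          ((card_commutatorWords_le S k).trans (Nat.pow_le_pow_left hSm _))
    _ ≤ J ^ (m ^ (k + 1)) := Nat.pow_le_pow_left hJ _

/-- Let `c`, `J`, `m` be positive integers.  If `G` is a nilpotent group of class at most
`c + 1` (i.e. `γ_{c+1}(G) = 1`) that can be generated by `m` elements and such that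
`γ_c(G)` is finite of cardinality at most `J`, then `G` has a subgroup `H` of nilpotency
class at most `c` (i.e. `γ_c(H) = 1`) of index at most `C = J ^ (m ^ c)`; in particular
the bound `C` depends only on `c`, `J` and `m`. -/
theorem nilpotent_class_reduction (c J m : ℕ) (hc : 0 < c) (hJ : 0 < J) (hm : 0 < m) :
    ∀ (G : Type) [Group G],
      (⊤ : Subgroup G).lowerCentralSeries (c + 1) = ⊥ →
      (∃ S : Finset G, S.card ≤ m ∧ Subgroup.closure (S : Set G) = ⊤) →
      ∀ _ : Finite ((⊤ : Subgroup G).lowerCentralSeries c),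
      Nat.card ((⊤ : Subgroup G).lowerCentralSeries c) ≤ J →
      ∃ H : Subgroup G, (⊤ : Subgroup H).lowerCentralSeries c = ⊥ ∧ H.index ≤ J ^ (m ^ c) :=
  nilpotent_class_reduction_general c J m hc
end

section
/- Let G be a finite group of Lie-type data as follows: G sits in a short exact sequence 1 → N → G → Γ → 1 where |N| ≤ J, Γ is nilpotent of class at most c, and G acts trivially on N by conjugation (N is central in G). If furthermore every subgroup of G can be generated by m elements, then G contains a nilpotent subgroup H of class at most c with index bounded by a constant depending only on c, J, m. -/
/-! Write `γₙ` for `(⊤ : Subgroup G).lowerCentralSeries n` (so `γ₀ = G`) and `Zₙ` for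
`upperCentralSeries G n`. Since `γ_c ≤ N` is central, `G` has class at most `c + 1`, and `Z_c`
works as `H`: it has class at most `c`. For the index, let `S` generate `G` with `|S| ≤ m`. Because
`γ_{c+1}` is central, `x ↦ (⁅x, s⁆)_{s ∈ S}` is a homomorphism `γ_c → γ_{c+1}^S` with kernel
`γ_c ∩ Z(G)`, so the image of `γ_c` in `G ⧸ Z(G)` has order at most `|γ_{c+1}|^m`. As `Z_c` is
the preimage of `Z_{c-1}(G ⧸ Z(G))`, induction on `c` gives `[G : Z_c] ≤ |γ_c|^(m^c) ≤ J^(m^c)`.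
-/

open QuotientGroup
open scoped commutatorElement

namespace Subgroup

variable {G : Type*} [Group G]

theorem lowerCentralSeries_quotient_eq_bot_iff (N : Subgroup G) [N.Normal] (n : ℕ) :
    (⊤ : Subgroup (G ⧸ N)).lowerCentralSeries n = ⊥ ↔
      (⊤ : Subgroup G).lowerCentralSeries n ≤ N := by
  rw [← map_top_of_surjective _ (mk'_surjective N), ← map_lowerCentralSeries, map_eq_bot_iff,
    ker_mk']

theorem lowerCentralSeries_eq_bot_of_le_upperCentralSeries {H : Subgroup G} {n : ℕ}
    (hH : H ≤ upperCentralSeries G n) : (⊤ : Subgroup H).lowerCentralSeries n = ⊥ := by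
  rw [lowerCentralSeries_eq_bot_iff_upperCentralSeries_eq_top, eq_top_iff]
  have hseries : IsAscendingCentralSeries fun k => (upperCentralSeries G k).comap H.subtype :=
    ⟨by simp, fun x k hx g => mem_upperCentralSeries_succ_iff.mp hx g⟩
  exact fun x _ => ascending_central_series_le_upper _ hseries n (hH x.2)

theorem card_map_mk_center_le [Finite G] {K : Subgroup G} (hK : ⁅K, ⊤⁆ ≤ center G)
    {S : Finset G} (hS : closure (S : Set G) = ⊤) :
    Nat.card (K.map (mk' (center G))) ≤ Nat.card ↥⁅K, (⊤ : Subgroup G)⁆ ^ S.card := by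
  have hcomm (x : K) (s : G) : ⁅(x : G), s⁆ ∈ ⁅K, (⊤ : Subgroup G)⁆ :=
    commutator_mem_commutator x.2 (mem_top s)
  let φ : K →* (S → ↥⁅K, (⊤ : Subgroup G)⁆) :=
    { toFun x s := ⟨⁅(x : G), s⁆, hcomm x s⟩
      map_one' := by ext; simp
      map_mul' x y := by
        ext s
        have hz := mem_center_iff.mp (hK (hcomm y s))
        change ⁅(x : G) * y, (s : G)⁆ = ⁅(x : G), (s : G)⁆ * ⁅(y : G), (s : G)⁆
        rw [commutatorElement_mul_left_eq_conj_mul, hz x, mul_inv_cancel_right]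
        exact (hz _).symm }
  have hker : φ.ker ≤ ((mk' (center G)).domRestrict K).ker := by
    intro x hx
    rw [MonoidHom.ker_domRestrict, mem_subgroupOf, ker_mk', center_eq_infi' hS, mem_iInf]
    intro s
    rw [mem_centralizer_singleton_iff, ← commutatorElement_eq_one_iff_mul_comm]
    exact congrArg (fun f => (f s : G)) (MonoidHom.mem_ker.mp hx)
  calc Nat.card (K.map (mk' (center G)))
      = ((mk' (center G)).domRestrict K).ker.index := by
        rw [index_ker, MonoidHom.domRestrict_range]
    _ ≤ φ.ker.index := index_antitone hker
    _ = Nat.card φ.range := index_ker φ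
    _ ≤ Nat.card (S → ↥⁅K, (⊤ : Subgroup G)⁆) :=
        Nat.card_le_card_of_injective _ Subtype.val_injective
    _ = _ := by rw [Nat.card_fun, Nat.card_eq_finsetCard]

theorem index_upperCentralSeries_le [Finite G] {c m : ℕ}
    (hG : (⊤ : Subgroup G).lowerCentralSeries (c + 1) = ⊥) {S : Finset G}
    (hS : closure (S : Set G) = ⊤) (hSm : S.card ≤ m) :
    (upperCentralSeries G c).index ≤
      Nat.card ((⊤ : Subgroup G).lowerCentralSeries c) ^ m ^ c := by
  induction c generalizing G with
  | zero => simp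
  | succ c ih =>
    classical
    have hcentral : (⊤ : Subgroup G).lowerCentralSeries (c + 1) ≤ center G := by
      rwa [← centralizer_univ, ← coe_top, ← commutator_eq_bot_iff_le_centralizer]
    have hQ : (⊤ : Subgroup (G ⧸ center G)).lowerCentralSeries (c + 1) = ⊥ :=
      (lowerCentralSeries_quotient_eq_bot_iff _ _).mpr hcentral
    have hSQ : closure (S.image (mk' (center G)) : Set (G ⧸ center G)) = ⊤ := by
      rw [Finset.coe_image, ← MonoidHom.map_closure, hS,
        map_top_of_surjective _ (mk'_surjective _)]
    have hγQ : Nat.card ((⊤ : Subgroup (G ⧸ center G)).lowerCentralSeries c) ≤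
        Nat.card ((⊤ : Subgroup G).lowerCentralSeries (c + 1)) ^ m :=
      calc Nat.card ((⊤ : Subgroup (G ⧸ center G)).lowerCentralSeries c)
          = Nat.card (((⊤ : Subgroup G).lowerCentralSeries c).map (mk' (center G))) := by
            rw [map_lowerCentralSeries, map_top_of_surjective _ (mk'_surjective _)]
        _ ≤ Nat.card ((⊤ : Subgroup G).lowerCentralSeries (c + 1)) ^ S.card :=
            card_map_mk_center_le hcentral hS
        _ ≤ _ := Nat.pow_le_pow_right Nat.card_pos hSm
    calc (upperCentralSeries G (c + 1)).index = (upperCentralSeries (G ⧸ center G) c).index := by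
          rw [← comap_upperCentralSeries_quotient_center,
            index_comap_of_surjective _ (mk'_surjective _)]
      _ ≤ Nat.card ((⊤ : Subgroup (G ⧸ center G)).lowerCentralSeries c) ^ m ^ c :=
          ih hQ hSQ (Finset.card_image_le.trans hSm)
      _ ≤ (Nat.card ((⊤ : Subgroup G).lowerCentralSeries (c + 1)) ^ m) ^ m ^ c :=
          Nat.pow_le_pow_left hγQ _
      _ = _ := by rw [← pow_mul, pow_succ']

end Subgroup

theorem central_extension_jordan_general (c J m : ℕ) :
    ∃ C : ℕ, ∀ (G : Type) [Group G], Finite G →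
      ∀ (N : Subgroup G) (_ : N.Normal), N ≤ Subgroup.center G → Nat.card N ≤ J →
        (⊤ : Subgroup (G ⧸ N)).lowerCentralSeries c = ⊥ →
        (∀ H : Subgroup G, ∃ S : Finset G, (S : Set G) ⊆ (H : Set G) ∧ S.card ≤ m ∧
          Subgroup.closure (S : Set G) = H) →
        ∃ H : Subgroup G, (⊤ : Subgroup H).lowerCentralSeries c = ⊥ ∧ H.index ≤ C := by
  refine ⟨J ^ m ^ c, fun G _ _ N _ hNcentral hNJ hquot hgen => ?_⟩
  have hγN : (⊤ : Subgroup G).lowerCentralSeries c ≤ N :=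
    (Subgroup.lowerCentralSeries_quotient_eq_bot_iff N c).mp hquot
  have hclass : (⊤ : Subgroup G).lowerCentralSeries (c + 1) = ⊥ :=
    Subgroup.lowerCentralSeries_succ_eq_bot _ (hγN.trans hNcentral)
  obtain ⟨S, -, hSm, hS⟩ := hgen ⊤
  refine ⟨Subgroup.upperCentralSeries G c,
    Subgroup.lowerCentralSeries_eq_bot_of_le_upperCentralSeries le_rfl, ?_⟩
  calc (Subgroup.upperCentralSeries G c).index
      ≤ Nat.card ((⊤ : Subgroup G).lowerCentralSeries c) ^ m ^ c :=
        Subgroup.index_upperCentralSeries_le hclass hS hSm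
    _ ≤ J ^ m ^ c := Nat.pow_le_pow_left ((Subgroup.card_le_of_le hγN).trans hNJ) _

/-- Let `c, J, m` be positive integers.  There is a constant `C` depending only on
`c, J, m` with the following property.  Let `G` be a finite group sitting in a short
exact sequence `1 → N → G → Γ → 1` where `N` is central in `G` (so `G` acts trivially on
`N` by conjugation), `|N| ≤ J`, and `Γ ≅ G ⧸ N` is nilpotent of class at most `c`.  If
moreover every subgroup of `G` can be generated by `m` elements, then `G` contains a
nilpotent subgroup `H` of class at most `c` with index at most `C`. -/
theorem central_extension_jordan (c J m : ℕ) (hc : 0 < c) (hJ : 0 < J) (hm : 0 < m) :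
    ∃ C : ℕ, ∀ (G : Type) [Group G], Finite G →
      ∀ (N : Subgroup G) (_ : N.Normal), N ≤ Subgroup.center G → Nat.card N ≤ J →
        (⊤ : Subgroup (G ⧸ N)).lowerCentralSeries c = ⊥ →
        (∀ H : Subgroup G, ∃ S : Finset G, (S : Set G) ⊆ (H : Set G) ∧ S.card ≤ m ∧
          Subgroup.closure (S : Set G) = H) →
        ∃ H : Subgroup G, (⊤ : Subgroup H).lowerCentralSeries c = ⊥ ∧ H.index ≤ C :=
  central_extension_jordan_general c J m
end
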